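/- If a finite group G is a central product of A and B, then m*(G)·|A ∩ B|² = m*(A)·m*(B). -/

import Mathlib

open scoped Pointwise

/-- Relative Chermak–Delgado measure `m_W(K) = |K| * |C_W(K)|`. -/
noncomputable def m {G : Type*} [Group G] (W K : Subgroup G) : ℕ :=
  Nat.card K * Nat.card (W ⊓ Subgroup.centralizer (K : Set G) : Subgroup G)

/-- The Chermak–Delgado lattice of `W`: subgroups of `W` maximizing `m W`. -/
def CD {G : Type*} [Group G] (W : Subgroup G) : Set (Subgroup G) :=
  {K | K ≤ W ∧ ∀ L ≤ W, m W L ≤ m W K}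

/-- `m*(W)`, the maximal Chermak–Delgado measure over subgroups of `W`. -/
noncomputable def mstar {G : Type*} [Group G] (W : Subgroup G) : ℕ :=
  ⨆ K : {K : Subgroup G // K ≤ W}, m W K

/-!
Put `Z = A ⊓ B`; it is central. For `X ≤ A` and `Y ≤ B` we have `C_G(XY) = C_A(X) C_B(Y)` with
`C_A(X) ∩ C_B(Y) = Z`, so the product formula `|ST| |S ∩ T| = |S| |T|` for commuting subgroups gives
`m_G(XY) |X ∩ Y| |Z| = m_A(X) m_B(Y)`. Taking `X`, `Y` maximal yields `m*(A) m*(B) ≤ m*(G) |Z|²`.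
Conversely, let `H` be maximal in `G`. The Chermak–Delgado inequality
`m_G(A) m_G(H) ≤ m_G(A ⊔ H) m_G(A ∩ H)`, Dedekind's law `A ⊔ H = A (B ∩ (A ⊔ H))`, and
`m_G(X) |Z| = m_A(X) |B|` for `X ≤ A` bound `m_G(A) |Z| · m*(G) |Z|²` by `m_G(A) |Z| · m*(A) m*(B)`.
-/
open Subgroup

section

variable {G : Type*} [Group G]

namespace Subgroup

theorem card_mul_relIndex {K L : Subgroup G} (h : K ≤ L) :
    Nat.card K * K.relIndex L = Nat.card L := by
  rw [← relIndex_bot_left, ← relIndex_bot_left, relIndex_mul_relIndex _ _ _ bot_le h]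

theorem card_inf_mul_relIndex (S T : Subgroup G) :
    Nat.card ↥(S ⊓ T) * T.relIndex S = Nat.card S := by
  rw [← inf_relIndex_left, card_mul_relIndex inf_le_left]

theorem card_mul_card_le_card_sup_mul_card_inf [Finite G] (S T : Subgroup G) :
    Nat.card S * Nat.card T ≤ Nat.card ↥(S ⊔ T) * Nat.card ↥(S ⊓ T) := by
  have hsup := card_mul_relIndex (le_sup_right : T ≤ S ⊔ T)
  have hidx : T.relIndex S ≤ T.relIndex (S ⊔ T) :=
    relIndex_le_of_le_right le_sup_left (right_ne_zero_of_mul (hsup ▸ Nat.card_pos.ne'))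
  rw [← card_inf_mul_relIndex S T, ← hsup]
  calc _ = Nat.card ↥(S ⊓ T) * Nat.card T * T.relIndex S := by ring
    _ ≤ Nat.card ↥(S ⊓ T) * Nat.card T * T.relIndex (S ⊔ T) := by gcongr
    _ = _ := by ring

theorem card_sup_mul_card_inf_of_le_normalizer {S T : Subgroup G} (h : S ≤ normalizer T) :
    Nat.card ↥(S ⊔ T) * Nat.card ↥(S ⊓ T) = Nat.card S * Nat.card T := by
  have hidx : T.relIndex (S ⊔ T) = T.relIndex S := by
    have := normal_subgroupOf_of_le_normalizer h
    have := normal_subgroupOf_sup_of_le_normalizer h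
    exact Nat.card_congr (QuotientGroup.quotientInfEquivProdNormalizerQuotient S T h).toEquiv.symm
  rw [← card_inf_mul_relIndex S T, ← card_mul_relIndex (le_sup_right : T ≤ S ⊔ T), hidx]
  ring

theorem centralizer_sup (S T : Subgroup G) :
    centralizer ((S ⊔ T : Subgroup G) : Set G) = centralizer S ⊓ centralizer T := by
  rw [sup_eq_closure, centralizer_closure]
  exact SetLike.coe_injective Set.centralizer_union

end Subgroup

theorem m_pos [Finite G] (W K : Subgroup G) : 0 < m W K :=
  Nat.mul_pos Nat.card_pos Nat.card_pos

theorem m_le_mstar [Finite G] {W K : Subgroup G} (hK : K ≤ W) : m W K ≤ mstar W :=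
  le_ciSup (f := fun K : {K : Subgroup G // K ≤ W} => m W K) (Set.finite_range _).bddAbove
    ⟨K, hK⟩

theorem exists_m_eq_mstar [Finite G] (W : Subgroup G) : ∃ K ≤ W, m W K = mstar W := by
  have : Nonempty {K : Subgroup G // K ≤ W} := ⟨⟨⊥, bot_le⟩⟩
  obtain ⟨⟨K, hK⟩, hmax⟩ := Finite.exists_max fun K : {K : Subgroup G // K ≤ W} => m W K
  exact ⟨K, hK, le_antisymm (m_le_mstar hK) (ciSup_le hmax)⟩

theorem m_top_mul_m_top_le_sup_mul_inf [Finite G] (S T : Subgroup G) :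
    m ⊤ S * m ⊤ T ≤ m ⊤ (S ⊔ T) * m ⊤ (S ⊓ T) := by
  have hcent : Nat.card (centralizer (S : Set G)) * Nat.card (centralizer (T : Set G)) ≤
      Nat.card (centralizer ((S ⊓ T : Subgroup G) : Set G)) *
        Nat.card (centralizer ((S ⊔ T : Subgroup G) : Set G)) := by
    rw [centralizer_sup]
    refine (card_mul_card_le_card_sup_mul_card_inf _ _).trans (Nat.mul_le_mul_right _ ?_)
    exact card_le_of_le (sup_le (centralizer_le inf_le_left) (centralizer_le inf_le_right))
  simp only [m, top_inf_eq]
  calc _ = Nat.card S * Nat.card T *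
        (Nat.card (centralizer (S : Set G)) * Nat.card (centralizer (T : Set G))) := by ring
    _ ≤ Nat.card ↥(S ⊔ T) * Nat.card ↥(S ⊓ T) *
        (Nat.card (centralizer ((S ⊓ T : Subgroup G) : Set G)) *
          Nat.card (centralizer ((S ⊔ T : Subgroup G) : Set G))) :=
      Nat.mul_le_mul (card_mul_card_le_card_sup_mul_card_inf S T) hcent
    _ = _ := by ring

structure IsCentralProduct (A B : Subgroup G) : Prop where
  exists_mul_eq : ∀ g : G, ∃ a ∈ A, ∃ b ∈ B, g = a * b
  commute : ∀ a ∈ A, ∀ b ∈ B, a * b = b * a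

namespace IsCentralProduct

variable {A B X Y : Subgroup G} (h : IsCentralProduct A B)
include h

theorem le_centralizer_left (hY : Y ≤ B) : A ≤ centralizer (Y : Set G) :=
  fun a ha => mem_centralizer_iff.mpr fun y hy => (h.commute a ha y (hY hy)).symm

theorem le_centralizer_right (hX : X ≤ A) : B ≤ centralizer (X : Set G) :=
  fun b hb => mem_centralizer_iff.mpr fun x hx => h.commute x (hX hx) b hb

theorem inf_le_center : A ⊓ B ≤ center G := by
  intro z hz
  rw [mem_center_iff]
  intro g
  obtain ⟨a, ha, b, hb, rfl⟩ := h.exists_mul_eq g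
  rw [mul_assoc, ← h.commute z hz.1 b hb, ← mul_assoc, h.commute a ha z hz.2, mul_assoc]

theorem sup_inf_eq {K : Subgroup G} (hAK : A ≤ K) : A ⊔ B ⊓ K = K := by
  refine le_antisymm (sup_le hAK inf_le_right) fun g hg => ?_
  obtain ⟨a, ha, b, hb, rfl⟩ := h.exists_mul_eq g
  have hbK : b ∈ K := by simpa using mul_mem (inv_mem (hAK ha)) hg
  exact mul_mem_sup ha ⟨hb, hbK⟩

theorem centralizer_sup (hX : X ≤ A) (hY : Y ≤ B) :
    centralizer ((X ⊔ Y : Subgroup G) : Set G) =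
      A ⊓ centralizer (X : Set G) ⊔ B ⊓ centralizer (Y : Set G) := by
  rw [Subgroup.centralizer_sup]
  apply le_antisymm
  · intro g hg
    obtain ⟨hgX, hgY⟩ := mem_inf.mp hg
    obtain ⟨a, ha, b, hb, rfl⟩ := h.exists_mul_eq g
    have haX : a ∈ centralizer (X : Set G) := by
      simpa using mul_mem hgX (inv_mem (h.le_centralizer_right hX hb))
    have hbY : b ∈ centralizer (Y : Set G) := by
      simpa using mul_mem (inv_mem (h.le_centralizer_left hY ha)) hgY
    exact mul_mem_sup ⟨ha, haX⟩ ⟨hb, hbY⟩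
  · exact sup_le (le_inf inf_le_right (inf_le_left.trans (h.le_centralizer_left hY)))
      (le_inf (inf_le_left.trans (h.le_centralizer_right hX)) inf_le_right)

theorem card_sup_mul_card_inf (hX : X ≤ A) (hY : Y ≤ B) :
    Nat.card ↥(X ⊔ Y) * Nat.card ↥(X ⊓ Y) = Nat.card X * Nat.card Y :=
  card_sup_mul_card_inf_of_le_normalizer
    ((hX.trans (h.le_centralizer_left hY)).trans (centralizer_le_normalizer _))

theorem m_top_sup_mul_card_inf_mul_card_inf (hX : X ≤ A) (hY : Y ≤ B) :
    m ⊤ (X ⊔ Y) * Nat.card ↥(X ⊓ Y) * Nat.card ↥(A ⊓ B) = m A X * m B Y := by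
  set X' := A ⊓ centralizer (X : Set G)
  set Y' := B ⊓ centralizer (Y : Set G)
  have hX'Y' : X' ⊓ Y' = A ⊓ B := by
    refine le_antisymm (inf_le_inf inf_le_left inf_le_left) ?_
    have hZ : A ⊓ B ≤ centralizer (X : Set G) ⊓ centralizer (Y : Set G) :=
      h.inf_le_center.trans (le_inf (center_le_centralizer _) (center_le_centralizer _))
    exact le_inf (le_inf inf_le_left (hZ.trans inf_le_left))
      (le_inf inf_le_right (hZ.trans inf_le_right))
  have hcard' := h.card_sup_mul_card_inf (inf_le_left : X' ≤ A) (inf_le_left : Y' ≤ B)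
  rw [hX'Y'] at hcard'
  simp only [m, top_inf_eq, h.centralizer_sup hX hY]
  calc _ = Nat.card ↥(X ⊔ Y) * Nat.card ↥(X ⊓ Y) *
        (Nat.card ↥(X' ⊔ Y') * Nat.card ↥(A ⊓ B)) := by ring
    _ = _ := by rw [h.card_sup_mul_card_inf hX hY, hcard']; ring

theorem m_top_mul_card_inf (hX : X ≤ A) :
    m ⊤ X * Nat.card ↥(A ⊓ B) = m A X * Nat.card B := by
  simpa [m, mem_centralizer_singleton_iff] using
    h.m_top_sup_mul_card_inf_mul_card_inf hX (bot_le : ⊥ ≤ B)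

theorem mstar_mul_mstar_le [Finite G] :
    mstar A * mstar B ≤ mstar (⊤ : Subgroup G) * Nat.card ↥(A ⊓ B) ^ 2 := by
  obtain ⟨X, hX, hXm⟩ := exists_m_eq_mstar A
  obtain ⟨Y, hY, hYm⟩ := exists_m_eq_mstar B
  rw [← hXm, ← hYm, ← h.m_top_sup_mul_card_inf_mul_card_inf hX hY, sq, ← mul_assoc]
  gcongr
  · exact m_le_mstar le_top
  · exact card_le_of_le (inf_le_inf hX hY)

theorem mstar_top_mul_le [Finite G] :
    mstar (⊤ : Subgroup G) * Nat.card ↥(A ⊓ B) ^ 2 ≤ mstar A * mstar B := by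
  obtain ⟨H, -, hHm⟩ := exists_m_eq_mstar (⊤ : Subgroup G)
  set Z := Nat.card ↥(A ⊓ B)
  set Y := B ⊓ (A ⊔ H)
  have hAY : A ⊔ Y = A ⊔ H := h.sup_inf_eq le_sup_left
  have hAY' : A ⊓ Y = A ⊓ B := by
    rw [inf_left_comm, inf_of_le_left (le_sup_left : A ≤ A ⊔ H), inf_comm]
  have hsup : m ⊤ (A ⊔ H) * Z * Z = m A A * m B Y := by
    have := h.m_top_sup_mul_card_inf_mul_card_inf (le_refl A) (inf_le_left : Y ≤ B)
    rwa [hAY', hAY] at this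
  have hinf := h.m_top_mul_card_inf (inf_le_left : A ⊓ H ≤ A)
  have hA := h.m_top_mul_card_inf (le_refl A)
  refine Nat.le_of_mul_le_mul_left ?_ (Nat.mul_pos (m_pos ⊤ A) (Nat.card_pos : 0 < Z))
  rw [← hHm]
  calc m ⊤ A * Z * (m ⊤ H * Z ^ 2) = m ⊤ A * m ⊤ H * (Z * Z * Z) := by ring
    _ ≤ m ⊤ (A ⊔ H) * m ⊤ (A ⊓ H) * (Z * Z * Z) :=
        Nat.mul_le_mul_right _ (m_top_mul_m_top_le_sup_mul_inf A H)
    _ = m ⊤ (A ⊔ H) * Z * Z * (m ⊤ (A ⊓ H) * Z) := by ring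
    _ = m A A * m B Y * (m A (A ⊓ H) * Nat.card B) := by rw [hsup, hinf]
    _ ≤ m A A * mstar B * (mstar A * Nat.card B) := by
        gcongr
        · exact m_le_mstar inf_le_left
        · exact m_le_mstar inf_le_left
    _ = m A A * Nat.card B * (mstar A * mstar B) := by ring
    _ = m ⊤ A * Z * (mstar A * mstar B) := by rw [hA]

end IsCentralProduct

end

theorem stmt14 {G : Type*} [Group G] [Finite G] (A B : Subgroup G)
    (hG : ∀ g : G, ∃ a ∈ A, ∃ b ∈ B, g = a * b)
    (hcomm : ∀ a ∈ A, ∀ b ∈ B, a * b = b * a) :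
    mstar (⊤ : Subgroup G) * Nat.card ↥(A ⊓ B) ^ 2 = mstar A * mstar B :=
  have h : IsCentralProduct A B := ⟨hG, hcomm⟩
  le_antisymm h.mstar_top_mul_le h.mstar_mul_mstar_le
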